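/- arXiv:math/0308163 — 2 statements merged into one kernel-verified Lean document; each statement's English description precedes it below -/
import Mathlib

section
/- The reflections of an Ether structure are involutions (Theorem 2.1(ii)): Let (ω,Γ) be a symplectic form with a symplectic connection on ℝ^{2n}, and let (ℋ,s) be an Ether structure for (ω,Γ) defined on all of ℝ^{2n}×ℝ^{2n}. Then s_x(s_x(z)) = z for all x,z ∈ ℝ^{2n}. -/
open scoped BigOperators
noncomputable section

/-- Points of coordinate space `ℝ^N`. -/
abbrev Pt (N : ℕ) := Fin N → ℝ

/-- Partial derivative `∂f/∂x^i` of a scalar function on `ℝ^N`. -/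
noncomputable def pd {N : ℕ} (i : Fin N) (f : Pt N → ℝ) (x : Pt N) : ℝ :=
  fderiv ℝ f x (Pi.single i 1)

/-- The Poisson tensor `Ψ = ω⁻¹`. -/
noncomputable def Psi {N : ℕ} (ω : Pt N → Matrix (Fin N) (Fin N) ℝ) (z : Pt N) :
    Matrix (Fin N) (Fin N) ℝ := (ω z)⁻¹

/-- The Poisson bracket `{f,g}(z) = Σ ∂_m f Ψ^{mi} ∂_i g`. -/
noncomputable def pb {N : ℕ} (ω : Pt N → Matrix (Fin N) (Fin N) ℝ) (f g : Pt N → ℝ)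
    (z : Pt N) : ℝ := ∑ m, ∑ i, pd m f z * Psi ω z m i * pd i g z

/-- A symplectic form on `ℝ^N` in coordinates: a smooth, pointwise antisymmetric and
invertible matrix-valued map satisfying the closedness condition. -/
structure SymplForm (N : ℕ) where
  ω : Pt N → Matrix (Fin N) (Fin N) ℝ
  smooth : ∀ i j, ContDiff ℝ (⊤ : ℕ∞) fun z => ω z i j
  antisymm : ∀ z i j, ω z i j = - ω z j i
  invertible : ∀ z, IsUnit (ω z).det
  closed : ∀ z i j k,
    pd i (fun w => ω w j k) z + pd j (fun w => ω w k i) z + pd k (fun w => ω w i j) z = 0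

/-- A symplectic connection for `S`: smooth Christoffel symbols `Γ x j k l = Γ^j_{kl}(x)`,
symmetric in the lower indices, with `ω` covariantly constant. -/
structure SymplConn (N : ℕ) (S : SymplForm N) where
  Γ : Pt N → Fin N → Fin N → Fin N → ℝ
  smooth : ∀ j k l, ContDiff ℝ (⊤ : ℕ∞) fun z => Γ z j k l
  symm : ∀ z j k l, Γ z j k l = Γ z j l k
  compat : ∀ z i j k,
    pd k (fun w => S.ω w i j) z - (∑ l, Γ z l i k * S.ω z l j)
      - (∑ l, Γ z l j k * S.ω z i l) = 0

/-- An Ether structure for `(ω, Γ)`: the Ether Hamiltonian `ℋ` (a 1-form in `x` with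
values in functions of `z`) and the reflections `s`, satisfying the zero-curvature
equation, the boundary conditions on the diagonal, the reflection (Ether Hamiltonian
system) equation, and the skew-symmetry condition. -/
structure EtherStructure (N : ℕ) (S : SymplForm N) (C : SymplConn N S) where
  H : Pt N → Pt N → Fin N → ℝ
  s : Pt N → Pt N → Pt N
  smoothH : ∀ k, ContDiff ℝ (⊤ : ℕ∞) fun p : Pt N × Pt N => H p.1 p.2 k
  smoothS : ∀ i, ContDiff ℝ (⊤ : ℕ∞) fun p : Pt N × Pt N => s p.1 p.2 i
  zeroCurv : ∀ x z j k,
    pd j (fun w => H w z k) x - pd k (fun w => H w z j) x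
      + pb S.ω (fun w => H x w j) (fun w => H x w k) z = 0
  bc0 : ∀ x k, H x x k = 0
  bc1 : ∀ x k m, pd m (fun w => H x w k) x = 2 * S.ω x k m
  bc2 : ∀ x k l m,
    pd l (fun w => pd m (fun w' => H x w' k) w) x
      = ∑ r, C.Γ x r l m * pd r (fun w => H x w k) x
  reflEq : ∀ x z j i,
    pd j (fun w => s w z i) x
      = ∑ m, pd m (fun w => H x w j) (s x z) * Psi S.ω (s x z) m i
  reflInit : ∀ z, s z z = z
  skew : ∀ x z k, H x (s x z) k = - H x z k

namespace EtherProof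


lemma clm_apply_sum {M : ℕ} (L : Pt M →L[ℝ] ℝ) (v : Pt M) :
    L v = ∑ k, v k * L (Pi.single k 1) := by
  have hv : v = ∑ k, v k • (Pi.single k (1:ℝ) : Pt M) := by
    funext j
    simp [Finset.sum_apply, Pi.single_apply]
  conv_lhs => rw [hv]
  rw [map_sum]
  simp [smul_eq_mul]

lemma pd_comp_dir {E : Type*} [NormedAddCommGroup E] [NormedSpace ℝ E] {M : ℕ}
    (f : Pt M → ℝ) (c : E → Pt M) (x : E) (v : E)
    (hf : DifferentiableAt ℝ f (c x)) (hc : ∀ k, DifferentiableAt ℝ (fun y => c y k) x) :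
    fderiv ℝ (fun y => f (c y)) x v
      = ∑ k, pd k f (c x) * fderiv ℝ (fun y => c y k) x v := by
  have hC : HasFDerivAt c (ContinuousLinearMap.pi fun k => fderiv ℝ (fun y => c y k) x) x :=
    hasFDerivAt_pi.2 fun k => (hc k).hasFDerivAt
  have h := (hf.hasFDerivAt.comp x hC).fderiv
  have : fderiv ℝ (fun y => f (c y)) x v
      = fderiv ℝ f (c x) ((ContinuousLinearMap.pi fun k => fderiv ℝ (fun y => c y k) x) v) := by
    rw [show (fun y => f (c y)) = f ∘ c from rfl, h]; rfl
  rw [this, clm_apply_sum]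
  refine Finset.sum_congr rfl fun k _ => ?_
  rw [ContinuousLinearMap.pi_apply, pd, mul_comm]

variable {N : ℕ}

/-- directional derivative in the first slot -/
lemma pd_left (f : Pt N × Pt N → ℝ) (x z : Pt N) (j : Fin N)
    (hf : DifferentiableAt ℝ f (x, z)) :
    pd j (fun w => f (w, z)) x = fderiv ℝ f (x, z) (Pi.single j 1, 0) := by
  have h1 : HasFDerivAt (fun w : Pt N => (w, z))
      (ContinuousLinearMap.inl ℝ (Pt N) (Pt N)) x := hasFDerivAt_prodMk_left x z
  have h := (hf.hasFDerivAt.comp x h1).fderiv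
  rw [pd, show (fun w => f (w, z)) = f ∘ (fun w : Pt N => (w, z)) from rfl, h]
  rfl

lemma pd_right (f : Pt N × Pt N → ℝ) (x z : Pt N) (l : Fin N)
    (hf : DifferentiableAt ℝ f (x, z)) :
    pd l (fun w => f (x, w)) z = fderiv ℝ f (x, z) (0, Pi.single l 1) := by
  have h1 : HasFDerivAt (fun w : Pt N => (x, w))
      (ContinuousLinearMap.inr ℝ (Pt N) (Pt N)) z := hasFDerivAt_prodMk_right x z
  have h := (hf.hasFDerivAt.comp z h1).fderiv
  rw [pd, show (fun w => f (x, w)) = f ∘ (fun w : Pt N => (x, w)) from rfl, h]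
  rfl

lemma fderiv_prod_dir (f : Pt N × Pt N → ℝ) (p : Pt N × Pt N) (a b : Pt N) :
    fderiv ℝ f p (a, b) = fderiv ℝ f p (a, 0) + fderiv ℝ f p (0, b) := by
  rw [← map_add]
  norm_num

lemma clm_apply_sum_right (L : Pt N × Pt N →L[ℝ] ℝ) (v : Pt N) :
    L ((0 : Pt N), v) = ∑ k, v k * L (0, Pi.single k 1) := by
  have := clm_apply_sum (L.comp (ContinuousLinearMap.inr ℝ (Pt N) (Pt N))) v
  simpa using this

/-- smoothness of a coordinate partial derivative -/
lemma contDiff_pd {f : Pt N → ℝ} (hf : ContDiff ℝ (⊤ : ℕ∞) f) (i : Fin N) :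
    ContDiff ℝ (⊤ : ℕ∞) fun x => pd i f x := by
  have h1 : ContDiff ℝ (⊤ : ℕ∞) fun x => fderiv ℝ f x := hf.fderiv_right (by simp)
  exact h1.clm_apply contDiff_const

lemma contDiff_slice_right {f : Pt N × Pt N → ℝ} (hf : ContDiff ℝ (⊤ : ℕ∞) f) (x : Pt N) :
    ContDiff ℝ (⊤ : ℕ∞) fun z => f (x, z) :=
  hf.comp (contDiff_const.prodMk contDiff_id)

lemma contDiff_slice_left {f : Pt N × Pt N → ℝ} (hf : ContDiff ℝ (⊤ : ℕ∞) f) (z : Pt N) :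
    ContDiff ℝ (⊤ : ℕ∞) fun x => f (x, z) :=
  hf.comp (contDiff_id.prodMk contDiff_const)

/-- swapping two directional derivatives of a smooth function -/
lemma dirderiv_swap {E : Type*} [NormedAddCommGroup E] [NormedSpace ℝ E]
    {f : E → ℝ} (hf : ContDiff ℝ (⊤ : ℕ∞) f) (p : E) (v w : E) :
    fderiv ℝ (fun q => fderiv ℝ f q v) p w = fderiv ℝ (fun q => fderiv ℝ f q w) p v := by
  have hdf : DifferentiableAt ℝ (fderiv ℝ f) p :=
    ((hf.fderiv_right (m := (⊤ : ℕ∞)) (by simp)).differentiable (by simp)) p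
  have h1 : ∀ u : E, fderiv ℝ (fun q => fderiv ℝ f q u) p
      = (fderiv ℝ (fderiv ℝ f) p).flip u := by
    intro u
    have h2 := fderiv_clm_apply (𝕜 := ℝ) (c := fderiv ℝ f) (u := fun _ => u) hdf
      (differentiableAt_const u)
    have h3 : fderiv ℝ (fun _ : E => u) p = 0 := fderiv_const_apply u
    rw [h3, ContinuousLinearMap.comp_zero, zero_add] at h2
    exact h2
  rw [h1 v, h1 w]
  have hsymm : IsSymmSndFDerivAt ℝ f p :=
    (hf.contDiffAt (x := p)).isSymmSndFDerivAt (by norm_num; exact WithTop.coe_le_coe.mpr le_top)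
  rw [ContinuousLinearMap.flip_apply, ContinuousLinearMap.flip_apply]
  exact hsymm w v



variable {N : ℕ}

/-- basic pd lemmas -/
lemma pd_sum {ι : Type*} (s : Finset ι) (f : ι → Pt N → ℝ) (x : Pt N) (k : Fin N)
    (h : ∀ i ∈ s, DifferentiableAt ℝ (f i) x) :
    pd k (fun z => ∑ i ∈ s, f i z) x = ∑ i ∈ s, pd k (f i) x := by
  rw [pd, fderiv_fun_sum h]
  simp [pd, ContinuousLinearMap.sum_apply]

lemma pd_mul (f g : Pt N → ℝ) (x : Pt N) (k : Fin N)
    (hf : DifferentiableAt ℝ f x) (hg : DifferentiableAt ℝ g x) :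
    pd k (fun z => f z * g z) x = pd k f x * g x + f x * pd k g x := by
  rw [pd, fderiv_fun_mul hf hg]
  simp [pd]
  ring

lemma pd_neg (f : Pt N → ℝ) (x : Pt N) (k : Fin N) :
    pd k (fun z => - f z) x = - pd k f x := by
  rw [pd, fderiv_fun_neg]
  simp [pd]

section Psi

variable (ω : Pt N → Matrix (Fin N) (Fin N) ℝ)
  (hω : ∀ i j, ContDiff ℝ (⊤ : ℕ∞) fun z => ω z i j)
  (hdet : ∀ z, IsUnit (ω z).det)

include hω in
lemma contDiff_det : ContDiff ℝ (⊤ : ℕ∞) fun z => (ω z).det := by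
  have : (fun z => (ω z).det)
      = fun z => ∑ σ : Equiv.Perm (Fin N), (Equiv.Perm.sign σ : ℤ) * ∏ i, ω z (σ i) i := by
    funext z
    rw [Matrix.det_apply]
    exact Finset.sum_congr rfl fun σ _ => by simp [Units.smul_def, zsmul_eq_mul]
  rw [this]
  exact ContDiff.sum fun σ _ =>
    (contDiff_const.mul (contDiff_prod fun i _ => hω (σ i) i))

include hω in
lemma contDiff_adjugate (i j : Fin N) :
    ContDiff ℝ (⊤ : ℕ∞) fun z => (ω z).adjugate i j := by
  have : (fun z => (ω z).adjugate i j)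
      = fun z => ((ω z).updateRow j (Pi.single i 1)).det := by
    funext z; rw [Matrix.adjugate_apply]
  rw [this]
  apply contDiff_det
  intro a b
  rcases eq_or_ne a j with rfl | haj
  · simpa [Matrix.updateRow_apply] using contDiff_const
  · simpa [Matrix.updateRow_apply, haj] using hω a b

include hω hdet in
lemma contDiff_psi (i j : Fin N) : ContDiff ℝ (⊤ : ℕ∞) fun z => Psi ω z i j := by
  have : (fun z => Psi ω z i j)
      = fun z => ((ω z).det)⁻¹ * (ω z).adjugate i j := by
    funext z
    rw [Psi, Matrix.inv_def, Matrix.smul_apply, Ring.inverse_eq_inv, smul_eq_mul]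
  rw [this]
  rw [contDiff_iff_contDiffAt]
  intro z
  exact (((contDiff_det ω hω).contDiffAt).inv (hdet z).ne_zero).mul
    ((contDiff_adjugate ω hω i j).contDiffAt)

include hdet in
lemma omega_psi (z : Pt N) (i l : Fin N) :
    ∑ a, ω z i a * Psi ω z a l = if i = l then (1:ℝ) else 0 := by
  have h := Matrix.mul_nonsing_inv (ω z) (hdet z)
  have h2 := congrFun (congrFun h i) l
  rw [Matrix.mul_apply] at h2
  unfold Psi
  rw [h2, Matrix.one_apply]

include hdet in
lemma psi_omega (z : Pt N) (i l : Fin N) :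
    ∑ a, Psi ω z i a * ω z a l = if i = l then (1:ℝ) else 0 := by
  have h := Matrix.nonsing_inv_mul (ω z) (hdet z)
  have h2 := congrFun (congrFun h i) l
  rw [Matrix.mul_apply] at h2
  unfold Psi
  rw [h2, Matrix.one_apply]

lemma psi_antisymm (hanti : ∀ z i j, ω z i j = - ω z j i) (hdet : ∀ z, IsUnit (ω z).det)
    (z : Pt N) (i j : Fin N) : Psi ω z i j = - Psi ω z j i := by
  have ht : (ω z).transpose = -(ω z) := by
    ext a b
    rw [Matrix.transpose_apply, Matrix.neg_apply]
    exact hanti z b a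
  have hneg : (-(ω z))⁻¹ = -((ω z)⁻¹) := by
    apply Matrix.inv_eq_right_inv
    rw [Matrix.neg_mul, Matrix.mul_neg, neg_neg, Matrix.mul_nonsing_inv _ (hdet z)]
  have h : ((ω z)⁻¹).transpose = -((ω z)⁻¹) := by
    rw [Matrix.transpose_nonsing_inv, ht, hneg]
  have := congrFun (congrFun h j) i
  rw [Matrix.transpose_apply, Matrix.neg_apply] at this
  unfold Psi
  exact this

include hω hdet in
lemma pd_psi (z : Pt N) (k i l : Fin N) :
    pd k (fun w => Psi ω w i l) z
      = -∑ m, ∑ a, Psi ω z i m * pd k (fun w => ω w m a) z * Psi ω z a l := by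
  have dω : ∀ (w : Pt N) a b, DifferentiableAt ℝ (fun w' => ω w' a b) w :=
    fun w a b => ((hω a b).differentiable (by simp)) w
  have dψ : ∀ (w : Pt N) a b, DifferentiableAt ℝ (fun w' => Psi ω w' a b) w :=
    fun w a b => (((contDiff_psi ω hω hdet a b)).differentiable (by simp)) w
  -- differentiate the identity ∑ a, ω w i' a * Psi ω w a l = const
  have key : ∀ i' : Fin N,
      ∑ a, ω z i' a * pd k (fun w => Psi ω w a l) z
        = - ∑ a, pd k (fun w => ω w i' a) z * Psi ω z a l := by
    intro i'
    have h1 : (fun w => ∑ a, ω w i' a * Psi ω w a l)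
        = fun _ => if i' = l then (1:ℝ) else 0 := by
      funext w; exact omega_psi ω hdet w i' l
    have h2 : pd k (fun w => ∑ a, ω w i' a * Psi ω w a l) z = 0 := by
      rw [h1, pd, fderiv_fun_const]
      simp
    rw [pd_sum Finset.univ (fun a w => ω w i' a * Psi ω w a l) z k
      (fun a _ => (dω z i' a).mul (dψ z a l))] at h2
    have h3 : ∑ a, (pd k (fun w => ω w i' a) z * Psi ω z a l
        + ω z i' a * pd k (fun w => Psi ω w a l) z) = 0 := by
      rw [← h2]
      exact Finset.sum_congr rfl fun a _ =>
        (pd_mul (fun w => ω w i' a) (fun w => Psi ω w a l) z k (dω z i' a) (dψ z a l)).symm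
    rw [Finset.sum_add_distrib] at h3
    linarith
  -- contract with Psi on the left
  have contr : ∑ m, Psi ω z i m * (∑ a, ω z m a * pd k (fun w => Psi ω w a l) z)
      = pd k (fun w => Psi ω w i l) z := by
    have e1 : ∀ m : Fin N, Psi ω z i m * (∑ a, ω z m a * pd k (fun w => Psi ω w a l) z)
        = ∑ a, Psi ω z i m * ω z m a * pd k (fun w => Psi ω w a l) z := by
      intro m
      rw [Finset.mul_sum]
      exact Finset.sum_congr rfl fun a _ => by ring
    rw [Finset.sum_congr rfl (fun m _ => e1 m), Finset.sum_comm]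
    have e2 : ∀ a : Fin N, ∑ m, Psi ω z i m * ω z m a * pd k (fun w => Psi ω w a l) z
        = (if i = a then (1:ℝ) else 0) * pd k (fun w => Psi ω w a l) z := by
      intro a
      rw [← Finset.sum_mul, psi_omega ω hdet z i a]
    rw [Finset.sum_congr rfl (fun a _ => e2 a)]
    simp
  rw [← contr]
  rw [Finset.sum_congr rfl (fun m _ => by rw [key m])]
  rw [← Finset.sum_neg_distrib]
  exact Finset.sum_congr rfl fun m _ => by
    rw [mul_neg, Finset.mul_sum, neg_inj]
    exact Finset.sum_congr rfl fun a _ => by ring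

include hω hdet in
lemma psi_contract_E (z : Pt N) (μ p q : Fin N) :
    ∑ k, Psi ω z k μ * pd k (fun w => Psi ω w p q) z
      = -∑ k, ∑ a, ∑ b,
          Psi ω z k μ * Psi ω z p a * pd k (fun w => ω w a b) z * Psi ω z b q := by
  rw [← Finset.sum_neg_distrib]
  refine Finset.sum_congr rfl fun k _ => ?_
  rw [pd_psi ω hω hdet z k p q, mul_neg, neg_inj, Finset.mul_sum]
  refine Finset.sum_congr rfl fun a _ => ?_
  rw [Finset.mul_sum]
  refine Finset.sum_congr rfl fun b _ => ?_
  ring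

lemma sum3_rot {α : Type*} [AddCommMonoid α] (F : Fin N → Fin N → Fin N → α) :
    (∑ x, ∑ y, ∑ z, F x y z) = ∑ x, ∑ y, ∑ z, F z x y := by
  conv_lhs => rw [Finset.sum_comm]
  exact Finset.sum_congr rfl fun y _ => Finset.sum_comm

include hω hdet in
lemma jacobi (hanti : ∀ z i j, ω z i j = - ω z j i)
    (hclosed : ∀ z i j k, pd i (fun w => ω w j k) z + pd j (fun w => ω w k i) z
      + pd k (fun w => ω w i j) z = 0) (z : Pt N) (m i l : Fin N) :
    ∑ k, (Psi ω z k m * pd k (fun w => Psi ω w i l) z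
      + Psi ω z k i * pd k (fun w => Psi ω w l m) z
      + Psi ω z k l * pd k (fun w => Psi ω w m i) z) = 0 := by
  have h1' : ∑ k, Psi ω z k m * pd k (fun w => Psi ω w i l) z
      = -∑ k, ∑ a, ∑ b, Psi ω z k m * Psi ω z i a * pd k (fun w => ω w a b) z * Psi ω z b l :=
    psi_contract_E ω hω hdet z m i l
  have h2' : ∑ k, Psi ω z k i * pd k (fun w => Psi ω w l m) z
      = -∑ k, ∑ a, ∑ b, Psi ω z k m * Psi ω z i a * Psi ω z b l
          * pd a (fun w => ω w b k) z := by
    refine (psi_contract_E ω hω hdet z i l m).trans ?_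
    rw [neg_inj]
    refine ((sum3_rot (fun k a b => Psi ω z k i * Psi ω z l a
        * pd k (fun w => ω w a b) z * Psi ω z b m)).trans ?_)
    refine ((sum3_rot (fun k a b => Psi ω z b i * Psi ω z l k
        * pd b (fun w => ω w k a) z * Psi ω z a m)).trans ?_)
    refine Finset.sum_congr rfl fun k _ => Finset.sum_congr rfl fun a _ =>
      Finset.sum_congr rfl fun b _ => ?_
    beta_reduce
    rw [psi_antisymm ω hanti hdet z a i, psi_antisymm ω hanti hdet z l b]
    ring
  have h3' : ∑ k, Psi ω z k l * pd k (fun w => Psi ω w m i) z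
      = -∑ k, ∑ a, ∑ b, Psi ω z k m * Psi ω z i a * Psi ω z b l
          * pd b (fun w => ω w k a) z := by
    refine (psi_contract_E ω hω hdet z l m i).trans ?_
    rw [neg_inj]
    refine ((sum3_rot (fun k a b => Psi ω z k l * Psi ω z m a
        * pd k (fun w => ω w a b) z * Psi ω z b i)).trans ?_)
    refine Finset.sum_congr rfl fun k _ => Finset.sum_congr rfl fun a _ =>
      Finset.sum_congr rfl fun b _ => ?_
    beta_reduce
    rw [psi_antisymm ω hanti hdet z m k, psi_antisymm ω hanti hdet z a i]
    ring
  rw [Finset.sum_add_distrib, Finset.sum_add_distrib, h1', h2', h3',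
    ← neg_add, ← neg_add, neg_eq_zero]
  simp only [← Finset.sum_add_distrib]
  refine Finset.sum_eq_zero fun k _ => Finset.sum_eq_zero fun a _ =>
    Finset.sum_eq_zero fun b _ => ?_
  linear_combination (Psi ω z k m * Psi ω z i a * Psi ω z b l) * hclosed z a b k

end Psi


section Ether

variable {N : ℕ} {S : SymplForm N} {C : SymplConn N S}

/-- the Ether Hamiltonian as a function on the product -/
def Hf (E : EtherStructure N S C) (k : Fin N) : Pt N × Pt N → ℝ :=
  fun p => E.H p.1 p.2 k

/-- the reflections as functions on the product -/
def Sf (E : EtherStructure N S C) (i : Fin N) : Pt N × Pt N → ℝ :=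
  fun p => E.s p.1 p.2 i

/-- the Ether Hamiltonian vector fields, jointly in `(x, w)` -/
def GG (E : EtherStructure N S C) (j i : Fin N) : Pt N × Pt N → ℝ :=
  fun p => ∑ m, fderiv ℝ (Hf E j) p (0, Pi.single m 1) * Psi S.ω p.2 m i

/-- second-slot derivatives of the vector fields -/
def BB (E : EtherStructure N S C) (j i k : Fin N) : Pt N × Pt N → ℝ :=
  fun p => fderiv ℝ (GG E j i) p (0, Pi.single k 1)

/-- second-slot Jacobian of the reflections -/
def AA (E : EtherStructure N S C) (i l : Fin N) : Pt N × Pt N → ℝ :=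
  fun p => fderiv ℝ (Sf E i) p (0, Pi.single l 1)

variable (E : EtherStructure N S C)

lemma smooth_Hf (k : Fin N) : ContDiff ℝ (⊤ : ℕ∞) (Hf E k) := E.smoothH k

lemma smooth_Sf (i : Fin N) : ContDiff ℝ (⊤ : ℕ∞) (Sf E i) := E.smoothS i

lemma smooth_GG (j i : Fin N) : ContDiff ℝ (⊤ : ℕ∞) (GG E j i) := by
  refine ContDiff.sum fun m _ => ContDiff.mul ?_ ?_
  · exact ((smooth_Hf E j).fderiv_right (by simp)).clm_apply contDiff_const
  · exact (contDiff_psi S.ω S.smooth S.invertible m i).comp contDiff_snd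

lemma smooth_BB (j i k : Fin N) : ContDiff ℝ (⊤ : ℕ∞) (BB E j i k) :=
  ((smooth_GG E j i).fderiv_right (by simp)).clm_apply contDiff_const

lemma smooth_AA (i l : Fin N) : ContDiff ℝ (⊤ : ℕ∞) (AA E i l) :=
  ((smooth_Sf E i).fderiv_right (by simp)).clm_apply contDiff_const

lemma pdH2 (x z : Pt N) (k m : Fin N) :
    pd m (fun w => E.H x w k) z = fderiv ℝ (Hf E k) (x, z) (0, Pi.single m 1) :=
  pd_right (Hf E k) x z m (((smooth_Hf E k).differentiable (by simp)) (x, z))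

lemma pdS2 (x z : Pt N) (i l : Fin N) :
    pd l (fun w => E.s x w i) z = AA E i l (x, z) :=
  pd_right (Sf E i) x z l (((smooth_Sf E i).differentiable (by simp)) (x, z))

lemma GG_eq (x w : Pt N) (j i : Fin N) :
    GG E j i (x, w) = ∑ m, pd m (fun w' => E.H x w' j) w * Psi S.ω w m i := by
  unfold GG
  exact Finset.sum_congr rfl fun m _ => by rw [pdH2]

lemma reflE' (x z : Pt N) (j i : Fin N) :
    pd j (fun w => E.s w z i) x = GG E j i (x, E.s x z) := by
  rw [E.reflEq x z j i, GG_eq]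

lemma sderiv1 (x z : Pt N) (j i : Fin N) :
    fderiv ℝ (Sf E i) (x, z) (Pi.single j 1, 0) = GG E j i (x, E.s x z) := by
  rw [← reflE']
  exact (pd_left (Sf E i) x z j (((smooth_Sf E i).differentiable (by simp)) (x, z))).symm

/-- differentiating the skew-symmetry relation in `z` -/
lemma skewD (x w : Pt N) (k l : Fin N) :
    ∑ i, fderiv ℝ (Hf E k) (x, E.s x w) (0, Pi.single i 1) * AA E i l (x, w)
      = - fderiv ℝ (Hf E k) (x, w) (0, Pi.single l 1) := by
  have hfun : (fun z => E.H x (E.s x z) k) = fun z => - E.H x z k := by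
    funext z; exact E.skew x z k
  have hl := congrArg (fun f => pd l f w) hfun
  -- left side: chain rule
  have hchain : pd l (fun z => E.H x (E.s x z) k) w
      = ∑ i, pd i (fun v => E.H x v k) (E.s x w) * pd l (fun z => E.s x z i) w := by
    have := pd_comp_dir (fun v => E.H x v k) (fun z => E.s x z) w (Pi.single l 1)
      (((contDiff_slice_right (smooth_Hf E k) x).differentiable (by simp)) (E.s x w))
      (fun i => ((contDiff_slice_right (smooth_Sf E i) x).differentiable (by simp)) w)
    exact this
  have hr : pd l (fun z => - E.H x z k) w = - pd l (fun z => E.H x z k) w :=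
    pd_neg (fun z => E.H x z k) w l
  rw [hchain, hr] at hl
  rw [← pdH2]
  rw [← hl]
  exact Finset.sum_congr rfl fun i _ => by rw [pdH2, pdS2]

/-- the reflections have Jacobian `-1` on the diagonal -/
lemma diagAA (x : Pt N) (i l : Fin N) :
    AA E i l (x, x) = - (if i = l then (1:ℝ) else 0) := by
  have h := skewD E x x
  rw [E.reflInit x] at h
  have hbc : ∀ k m : Fin N, fderiv ℝ (Hf E k) (x, x) (0, Pi.single m 1) = 2 * S.ω x k m := by
    intro k m
    rw [← pdH2]
    exact E.bc1 x k m
  have h2 : ∀ k : Fin N, ∑ i, S.ω x k i * (AA E i l (x, x) + (if i = l then (1:ℝ) else 0)) = 0 := by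
    intro k
    have hk := h k l
    simp only [hbc] at hk
    have : ∑ i, S.ω x k i * (AA E i l (x, x) + (if i = l then (1:ℝ) else 0))
        = ∑ i, S.ω x k i * AA E i l (x, x) + S.ω x k l := by
      rw [Finset.sum_congr rfl (fun i _ => mul_add (S.ω x k i) _ _), Finset.sum_add_distrib]
      congr 1
      simp [mul_ite]
    rw [this]
    have h3 : ∑ i, S.ω x k i * AA E i l (x, x) = - S.ω x k l := by
      have e1 : ∑ i, 2 * S.ω x k i * AA E i l (x, x) = -(2 * S.ω x k l) := hk
      have e2 : ∑ i, 2 * S.ω x k i * AA E i l (x, x)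
          = 2 * ∑ i, S.ω x k i * AA E i l (x, x) := by
        rw [Finset.mul_sum]
        exact Finset.sum_congr rfl fun i _ => by ring
      rw [e2] at e1
      linarith
    rw [h3]
    ring
  -- contract with Psi
  have key : ∀ j : Fin N, AA E j l (x, x) + (if j = l then (1:ℝ) else 0) = 0 := by
    intro j
    have : ∑ a, Psi S.ω x j a * (∑ i, S.ω x a i * (AA E i l (x, x) + (if i = l then (1:ℝ) else 0))) = 0 := by
      refine Finset.sum_eq_zero fun a _ => ?_
      rw [h2 a, mul_zero]
    have swap : ∑ a, Psi S.ω x j a * (∑ i, S.ω x a i * (AA E i l (x, x) + (if i = l then (1:ℝ) else 0)))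
        = ∑ i, (∑ a, Psi S.ω x j a * S.ω x a i) * (AA E i l (x, x) + (if i = l then (1:ℝ) else 0)) := by
      rw [Finset.sum_congr rfl (fun a _ => by rw [Finset.mul_sum]), Finset.sum_comm]
      refine Finset.sum_congr rfl fun i _ => ?_
      rw [Finset.sum_mul]
      exact Finset.sum_congr rfl fun a _ => by ring
    rw [swap] at this
    have swap2 : ∑ i, (∑ a, Psi S.ω x j a * S.ω x a i) * (AA E i l (x, x) + (if i = l then (1:ℝ) else 0))
        = AA E j l (x, x) + (if j = l then (1:ℝ) else 0) := by
      rw [Finset.sum_congr rfl (fun i _ => by rw [psi_omega S.ω S.invertible x j i])]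
      simp
    rw [swap2] at this
    exact this
  have := key i
  linarith [key i]

/-- mixed partial derivative of the reflections: the `x`-derivative of the
`z`-Jacobian. -/
lemma mixedAA (x w : Pt N) (j i l : Fin N) :
    pd j (fun x' => AA E i l (x', w)) x
      = ∑ k, BB E j i k (x, E.s x w) * AA E k l (x, w) := by
  have hΦ : DifferentiableAt ℝ (fun q : Pt N × Pt N =>
      fderiv ℝ (Sf E i) q (0, Pi.single l 1)) (x, w) :=
    ((smooth_AA E i l).differentiable (by simp)) (x, w)
  have h1 : pd j (fun x' => AA E i l (x', w)) x
      = fderiv ℝ (fun q : Pt N × Pt N => fderiv ℝ (Sf E i) q (0, Pi.single l 1)) (x, w)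
          (Pi.single j 1, 0) :=
    pd_left (fun q => fderiv ℝ (Sf E i) q (0, Pi.single l 1)) x w j hΦ
  have h2 := dirderiv_swap (smooth_Sf E i) (x, w)
    ((0 : Pt N), Pi.single l 1) (Pi.single j 1, (0 : Pt N))
  have h3 : (fun q : Pt N × Pt N => fderiv ℝ (Sf E i) q (Pi.single j 1, 0))
      = fun q => GG E j i (q.1, E.s q.1 q.2) := by
    funext q
    obtain ⟨a, b⟩ := q
    exact sderiv1 E a b j i
  rw [h3] at h2
  have hsmoothGs : ContDiff ℝ (⊤ : ℕ∞) (fun p : Pt N × Pt N => GG E j i (p.1, E.s p.1 p.2)) :=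
    (smooth_GG E j i).comp (contDiff_fst.prodMk (contDiff_pi.mpr fun a => E.smoothS a))
  have h4 : fderiv ℝ (fun q : Pt N × Pt N => GG E j i (q.1, E.s q.1 q.2)) (x, w)
        (0, Pi.single l 1)
      = pd l (fun z => GG E j i (x, E.s x z)) w :=
    (pd_right (fun p : Pt N × Pt N => GG E j i (p.1, E.s p.1 p.2)) x w l
      ((hsmoothGs.differentiable (by simp)) (x, w))).symm
  have h5 : pd l (fun z => GG E j i (x, E.s x z)) w
      = ∑ k, pd k (fun v => GG E j i (x, v)) (E.s x w) * pd l (fun z => E.s x z k) w :=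
    pd_comp_dir (fun v => GG E j i (x, v)) (fun z => E.s x z) w (Pi.single l 1)
      (((contDiff_slice_right (smooth_GG E j i) x).differentiable (by simp)) _)
      (fun a => ((contDiff_slice_right (smooth_Sf E a) x).differentiable (by simp)) w)
  rw [h1, h2, h4, h5]
  refine Finset.sum_congr rfl fun k _ => ?_
  congr 1
  · exact pd_right (GG E j i) x (E.s x w) k
      (((smooth_GG E j i).differentiable (by simp)) _)
  · exact pdS2 E x w k l

/-- the Ether Hamiltonian vector fields are infinitesimally Poisson
(`L_X Ψ = 0`), as a consequence of the Jacobi identity. -/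
lemma lieDeriv (x v : Pt N) (j i l : Fin N) :
    (∑ k, BB E j i k (x, v) * Psi S.ω v k l)
      + (∑ k, Psi S.ω v i k * BB E j l k (x, v))
      = ∑ k, GG E j k (x, v) * pd k (fun w => Psi S.ω w i l) v := by
  have hHx : ContDiff ℝ (⊤ : ℕ∞) (fun w => E.H x w j) := contDiff_slice_right (smooth_Hf E j) x
  have hsm : ∀ m : Fin N, ContDiff ℝ (⊤ : ℕ∞) (fun w => pd m (fun w' => E.H x w' j) w) :=
    fun m => contDiff_pd hHx m
  have hψsm : ∀ a b : Fin N, ContDiff ℝ (⊤ : ℕ∞) (fun w => Psi S.ω w a b) :=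
    fun a b => contDiff_psi S.ω S.smooth S.invertible a b
  -- value of BB on a slice
  have BBval : ∀ i' k : Fin N, BB E j i' k (x, v)
      = ∑ m, (pd k (fun w => pd m (fun w' => E.H x w' j) w) v * Psi S.ω v m i'
          + pd m (fun w' => E.H x w' j) v * pd k (fun w => Psi S.ω w m i') v) := by
    intro i' k
    have hb : BB E j i' k (x, v) = pd k (fun w => GG E j i' (x, w)) v :=
      (pd_right (GG E j i') x v k (((smooth_GG E j i').differentiable (by simp)) _)).symm
    have hfun : (fun w => GG E j i' (x, w))
        = fun w => ∑ m, pd m (fun w' => E.H x w' j) w * Psi S.ω w m i' := by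
      funext w; exact GG_eq E x w j i'
    rw [hb, hfun, pd_sum Finset.univ (fun m w => pd m (fun w' => E.H x w' j) w * Psi S.ω w m i') v k (fun m _ =>
      (((hsm m).differentiable (by simp)) v).mul (((hψsm m i').differentiable (by simp)) v))]
    exact Finset.sum_congr rfl fun m _ =>
      pd_mul _ _ v k (((hsm m).differentiable (by simp)) v) (((hψsm m i').differentiable (by simp)) v)
  -- symmetry of the second derivatives of H in the second slot
  have Qsymm : ∀ k m : Fin N, pd k (fun w => pd m (fun w' => E.H x w' j) w) v
      = pd m (fun w => pd k (fun w' => E.H x w' j) w) v :=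
    fun k m => dirderiv_swap hHx v (Pi.single m 1) (Pi.single k 1)
  -- antisymmetry shortcuts
  have Panti : ∀ a b : Fin N, Psi S.ω v a b = - Psi S.ω v b a :=
    fun a b => psi_antisymm S.ω S.antisymm S.invertible v a b
  have dPanti : ∀ (k a b : Fin N), pd k (fun w => Psi S.ω w a b) v
      = - pd k (fun w => Psi S.ω w b a) v := by
    intro k a b
    have : (fun w => Psi S.ω w a b) = fun w => - Psi S.ω w b a := by
      funext w; exact psi_antisymm S.ω S.antisymm S.invertible w a b
    rw [this, pd_neg]
  -- expand both sides
  have E1 : ∑ k, BB E j i k (x, v) * Psi S.ω v k l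
      = (∑ k, ∑ m, pd k (fun w => pd m (fun w' => E.H x w' j) w) v
            * (Psi S.ω v m i * Psi S.ω v k l))
        + ∑ k, ∑ m, pd m (fun w' => E.H x w' j) v
            * (pd k (fun w => Psi S.ω w m i) v * Psi S.ω v k l) := by
    rw [← Finset.sum_add_distrib]
    refine Finset.sum_congr rfl fun k _ => ?_
    rw [BBval i k, Finset.sum_mul, ← Finset.sum_add_distrib]
    refine Finset.sum_congr rfl fun m _ => by ring
  have E2 : ∑ k, Psi S.ω v i k * BB E j l k (x, v)
      = (∑ k, ∑ m, pd k (fun w => pd m (fun w' => E.H x w' j) w) v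
            * (Psi S.ω v m l * Psi S.ω v i k))
        + ∑ k, ∑ m, pd m (fun w' => E.H x w' j) v
            * (pd k (fun w => Psi S.ω w m l) v * Psi S.ω v i k) := by
    rw [← Finset.sum_add_distrib]
    refine Finset.sum_congr rfl fun k _ => ?_
    rw [BBval l k, Finset.mul_sum, ← Finset.sum_add_distrib]
    refine Finset.sum_congr rfl fun m _ => by ring
  have E3 : ∑ k, GG E j k (x, v) * pd k (fun w => Psi S.ω w i l) v
      = ∑ k, ∑ m, pd m (fun w' => E.H x w' j) v
          * (Psi S.ω v m k * pd k (fun w => Psi S.ω w i l) v) := by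
    refine Finset.sum_congr rfl fun k _ => ?_
    rw [GG_eq E x v j k, Finset.sum_mul]
    refine Finset.sum_congr rfl fun m _ => by ring
  -- the second-derivative part cancels by symmetry/antisymmetry
  have part1 : (∑ k, ∑ m, pd k (fun w => pd m (fun w' => E.H x w' j) w) v
        * (Psi S.ω v m i * Psi S.ω v k l))
      + (∑ k, ∑ m, pd k (fun w => pd m (fun w' => E.H x w' j) w) v
        * (Psi S.ω v m l * Psi S.ω v i k)) = 0 := by
    have swapped : (∑ k, ∑ m, pd k (fun w => pd m (fun w' => E.H x w' j) w) v
          * (Psi S.ω v m l * Psi S.ω v i k))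
        = ∑ k, ∑ m, -(pd k (fun w => pd m (fun w' => E.H x w' j) w) v
          * (Psi S.ω v m i * Psi S.ω v k l)) := by
      rw [Finset.sum_comm]
      refine Finset.sum_congr rfl fun k _ => Finset.sum_congr rfl fun m _ => ?_
      rw [Qsymm m k, Panti k l, Panti i m]
      ring
    rw [swapped]
    simp only [Finset.sum_neg_distrib]
    ring
  -- the first-derivative part is the Jacobi identity
  have part2 : (∑ k, ∑ m, pd m (fun w' => E.H x w' j) v
        * (pd k (fun w => Psi S.ω w m i) v * Psi S.ω v k l))
      + (∑ k, ∑ m, pd m (fun w' => E.H x w' j) v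
        * (pd k (fun w => Psi S.ω w m l) v * Psi S.ω v i k))
      = ∑ k, ∑ m, pd m (fun w' => E.H x w' j) v
          * (Psi S.ω v m k * pd k (fun w => Psi S.ω w i l) v) := by
    rw [Finset.sum_comm, Finset.sum_comm (f := fun k m => pd m (fun w' => E.H x w' j) v
        * (pd k (fun w => Psi S.ω w m l) v * Psi S.ω v i k)),
      Finset.sum_comm (f := fun k m => pd m (fun w' => E.H x w' j) v
        * (Psi S.ω v m k * pd k (fun w => Psi S.ω w i l) v)),
      ← Finset.sum_add_distrib]
    refine Finset.sum_congr rfl fun m _ => ?_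
    rw [← Finset.mul_sum, ← Finset.mul_sum, ← Finset.mul_sum, ← mul_add]
    by_cases hm : pd m (fun w' => E.H x w' j) v = 0
    · rw [hm]; ring
    congr 1
    have hj := jacobi S.ω S.smooth S.invertible S.antisymm S.closed v m i l
    rw [← Finset.sum_add_distrib] at *
    calc ∑ k, (pd k (fun w => Psi S.ω w m i) v * Psi S.ω v k l
            + pd k (fun w => Psi S.ω w m l) v * Psi S.ω v i k)
        = ∑ k, (Psi S.ω v k m * pd k (fun w => Psi S.ω w i l) v
            + Psi S.ω v k i * pd k (fun w => Psi S.ω w l m) v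
            + Psi S.ω v k l * pd k (fun w => Psi S.ω w m i) v)
          + ∑ k, Psi S.ω v m k * pd k (fun w => Psi S.ω w i l) v := by
          rw [← Finset.sum_add_distrib]
          refine Finset.sum_congr rfl fun k _ => ?_
          rw [dPanti k m l, Panti i k, Panti m k]
          ring
      _ = ∑ k, Psi S.ω v m k * pd k (fun w => Psi S.ω w i l) v := by rw [hj]; ring
  rw [E1, E2, E3]
  linarith [part1, part2]

end Ether

section Gronwall

open Set

/-- A matrix-valued function on `ℝ^N` vanishing at a point and satisfying a linear
first-order PDE system with continuous coefficients vanishes identically. -/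
lemma linear_ode_zero {N : ℕ} (M : Pt N → Fin N → Fin N → ℝ)
    (Bc : Pt N → Fin N → Fin N → Fin N → ℝ)
    (hM : ∀ i l, ContDiff ℝ (⊤ : ℕ∞) fun y => M y i l)
    (hBc : ∀ j i k, Continuous fun y => Bc y j i k)
    (hode : ∀ y j i_ l, pd j (fun y' => M y' i_ l) y
      = (∑ k, Bc y j i_ k * M y k l) + ∑ k, M y i_ k * Bc y j l k)
    (w : Pt N) (h0 : ∀ i l, M w i l = 0) : ∀ x i l, M x i l = 0 := by
  intro x
  set γ : ℝ → Pt N := fun t => w + t • (x - w) with hγ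
  have hγd : ∀ t : ℝ, HasDerivAt γ (x - w) t := by
    intro t
    have h1 : HasDerivAt (fun t : ℝ => t • (x - w)) ((1:ℝ) • (x - w)) t := by
      simpa using (hasDerivAt_id t).smul_const (x - w)
    have h2 := h1.const_add w
    rw [one_smul] at h2
    exact h2
  have hγc : Continuous γ := by
    apply continuous_const.add
    exact continuous_id.smul continuous_const
  set m : ℝ → (Fin N → Fin N → ℝ) := fun t i_ l => M (γ t) i_ l with hm
  set m' : ℝ → (Fin N → Fin N → ℝ) :=
    fun t i_ l => ∑ j, (x j - w j) * pd j (fun y => M y i_ l) (γ t) with hm'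
  have hder : ∀ t : ℝ, HasDerivAt m (m' t) t := by
    intro t
    rw [hasDerivAt_pi]
    intro i_
    rw [hasDerivAt_pi]
    intro l
    have hMd : DifferentiableAt ℝ (fun y => M y i_ l) (γ t) :=
      ((hM i_ l).differentiable (by simp)) _
    have h2 : HasDerivAt (fun t' => M (γ t') i_ l)
        (fderiv ℝ (fun y => M y i_ l) (γ t) (x - w)) t :=
      hMd.hasFDerivAt.comp_hasDerivAt t (hγd t)
    have h3 : fderiv ℝ (fun y => M y i_ l) (γ t) (x - w)
        = ∑ j, (x j - w j) * pd j (fun y => M y i_ l) (γ t) := by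
      rw [clm_apply_sum (fderiv ℝ (fun y => M y i_ l) (γ t)) (x - w)]
      exact Finset.sum_congr rfl fun j _ => by rw [Pi.sub_apply]; rfl
    rw [h3] at h2
    exact h2
  -- a bound for the coefficients on the segment
  set g : ℝ → ℝ := fun t => ∑ j, |x j - w j| * ∑ i_, ∑ k, |Bc (γ t) j i_ k| with hg
  have hgc : Continuous g := by
    apply continuous_finset_sum
    intro j _
    apply Continuous.mul continuous_const
    apply continuous_finset_sum
    intro i_ _
    apply continuous_finset_sum
    intro k _
    exact ((hBc j i_ k).comp hγc).abs
  obtain ⟨t0, _, ht0⟩ := isCompact_Icc.exists_isMaxOn (f := g)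
    (Set.nonempty_Icc.mpr zero_le_one) hgc.continuousOn
  set K0 : ℝ := g t0 with hK0def
  have hK0 : ∀ t ∈ Icc (0:ℝ) 1, g t ≤ K0 := fun t ht => ht0 ht
  set K : ℝ := 2 * max K0 0 with hK
  have hKnn : 0 ≤ K := by positivity
  -- entry bound
  have hmemb : ∀ (t : ℝ) (a b : Fin N), |m t a b| ≤ ‖m t‖ := by
    intro t a b
    calc |m t a b| = ‖m t a b‖ := (Real.norm_eq_abs _).symm
      _ ≤ ‖m t a‖ := norm_le_pi_norm (m t a) b
      _ ≤ ‖m t‖ := norm_le_pi_norm (m t) a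
  have bound : ∀ t ∈ Ico (0:ℝ) 1, ‖m' t‖ ≤ K * ‖m t‖ := by
    intro t ht
    have htI : t ∈ Icc (0:ℝ) 1 := Ico_subset_Icc_self ht
    rw [pi_norm_le_iff_of_nonneg (mul_nonneg hKnn (norm_nonneg _))]
    intro i_
    rw [pi_norm_le_iff_of_nonneg (mul_nonneg hKnn (norm_nonneg _))]
    intro l
    have hSnn : ∀ j : Fin N, (0:ℝ) ≤ ∑ i', ∑ k, |Bc (γ t) j i' k| :=
      fun j => Finset.sum_nonneg fun i' _ => Finset.sum_nonneg fun k _ => abs_nonneg _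
    have step1 : ∀ j : Fin N, |pd j (fun y => M y i_ l) (γ t)|
        ≤ 2 * (∑ i', ∑ k, |Bc (γ t) j i' k|) * ‖m t‖ := by
      intro j
      rw [hode (γ t) j i_ l]
      have e1 : |(∑ k, Bc (γ t) j i_ k * M (γ t) k l)
            + ∑ k, M (γ t) i_ k * Bc (γ t) j l k|
          ≤ (∑ k, |Bc (γ t) j i_ k| * ‖m t‖) + ∑ k, ‖m t‖ * |Bc (γ t) j l k| := by
        refine (abs_add_le _ _).trans (add_le_add ?_ ?_)
        · refine (Finset.abs_sum_le_sum_abs _ _).trans (Finset.sum_le_sum fun k _ => ?_)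
          rw [abs_mul]
          exact mul_le_mul_of_nonneg_left (hmemb t k l) (abs_nonneg _)
        · refine (Finset.abs_sum_le_sum_abs _ _).trans (Finset.sum_le_sum fun k _ => ?_)
          rw [abs_mul]
          exact mul_le_mul_of_nonneg_right (hmemb t i_ k) (abs_nonneg _)
      refine e1.trans ?_
      have e2 : ∑ k, |Bc (γ t) j i_ k| * ‖m t‖
          ≤ (∑ i', ∑ k, |Bc (γ t) j i' k|) * ‖m t‖ := by
        rw [← Finset.sum_mul]
        refine mul_le_mul_of_nonneg_right ?_ (norm_nonneg _)
        exact Finset.single_le_sum (f := fun i' => ∑ k, |Bc (γ t) j i' k|)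
          (fun i' _ => Finset.sum_nonneg fun k _ => abs_nonneg _) (Finset.mem_univ i_)
      have e3 : ∑ k, ‖m t‖ * |Bc (γ t) j l k|
          ≤ (∑ i', ∑ k, |Bc (γ t) j i' k|) * ‖m t‖ := by
        rw [← Finset.mul_sum, mul_comm]
        refine mul_le_mul_of_nonneg_right ?_ (norm_nonneg _)
        exact Finset.single_le_sum (f := fun i' => ∑ k, |Bc (γ t) j i' k|)
          (fun i' _ => Finset.sum_nonneg fun k _ => abs_nonneg _) (Finset.mem_univ l)
      linarith
    calc ‖m' t i_ l‖
        = |∑ j, (x j - w j) * pd j (fun y => M y i_ l) (γ t)| := Real.norm_eq_abs _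
      _ ≤ ∑ j, |(x j - w j) * pd j (fun y => M y i_ l) (γ t)| :=
          Finset.abs_sum_le_sum_abs _ _
      _ ≤ ∑ j, |x j - w j| * (2 * (∑ i', ∑ k, |Bc (γ t) j i' k|) * ‖m t‖) := by
          refine Finset.sum_le_sum fun j _ => ?_
          rw [abs_mul]
          exact mul_le_mul_of_nonneg_left (step1 j) (abs_nonneg _)
      _ = 2 * g t * ‖m t‖ := by
          rw [hg]
          simp only []
          rw [mul_assoc, Finset.sum_mul, Finset.mul_sum]
          exact Finset.sum_congr rfl fun j _ => by ring
      _ ≤ K * ‖m t‖ := by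
          have h1 : g t ≤ max K0 0 := le_trans (hK0 t htI) (le_max_left _ _)
          have h2 : 0 ≤ g t := Finset.sum_nonneg fun j _ =>
            mul_nonneg (abs_nonneg _) (hSnn j)
          nlinarith [norm_nonneg (m t)]
  -- apply Gronwall
  have hcont : ContinuousOn m (Icc (0:ℝ) 1) := by
    refine Continuous.continuousOn ?_
    refine continuous_pi fun i_ => continuous_pi fun l => ?_
    exact (((hM i_ l).continuous)).comp hγc
  have hm0 : m 0 = 0 := by
    funext i_ l
    have : γ 0 = w := by simp [hγ]
    rw [hm]
    simp only [this]
    exact h0 i_ l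
  have hgron := norm_le_gronwallBound_of_norm_deriv_right_le (δ := 0) (K := K) (ε := 0)
    hcont (fun t _ => (hder t).hasDerivWithinAt)
    (by rw [hm0, norm_zero]) (fun t ht => by simpa using bound t ht)
  have hend := hgron 1 (by norm_num)
  rw [gronwallBound_ε0_δ0] at hend
  have hm1 : m 1 = 0 := by
    rwa [norm_le_zero_iff] at hend
  have hγ1 : γ 1 = x := by
    simp [hγ]
  intro i_ l
  have := congrFun (congrFun hm1 i_) l
  rw [hm] at this
  simp only [hγ1] at this
  exact this

end Gronwall

section Ether2

variable {N : ℕ} {S : SymplForm N} {C : SymplConn N S} (E : EtherStructure N S C)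

lemma pd_sub {N : ℕ} (f g : Pt N → ℝ) (x : Pt N) (k : Fin N)
    (hf : DifferentiableAt ℝ f x) (hg : DifferentiableAt ℝ g x) :
    pd k (fun z => f z - g z) x = pd k f x - pd k g x := by
  rw [pd, fderiv_fun_sub hf hg]
  simp [pd]

lemma pd_mul_const {N : ℕ} (f : Pt N → ℝ) (c : ℝ) (x : Pt N) (k : Fin N)
    (hf : DifferentiableAt ℝ f x) :
    pd k (fun z => f z * c) x = pd k f x * c := by
  rw [pd, fderiv_mul_const hf]
  simp [pd]
  ring

lemma sum3_rot' {N : ℕ} {α : Type*} [AddCommMonoid α] (F : Fin N → Fin N → Fin N → α) :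
    (∑ x, ∑ y, ∑ z, F x y z) = ∑ x, ∑ y, ∑ z, F y z x :=
  (sum3_rot F).trans (sum3_rot fun x y z => F z x y)

/-- the reflections are anti-Poisson maps (Poisson property of the Jacobian). -/
lemma poisson (x w : Pt N) (i l : Fin N) :
    ∑ a, ∑ b, AA E i a (x, w) * Psi S.ω w a b * AA E l b (x, w)
      = Psi S.ω (E.s x w) i l := by
  -- smoothness facts
  have hψsm : ∀ a b : Fin N, ContDiff ℝ (⊤ : ℕ∞) fun v => Psi S.ω v a b :=
    fun a b => contDiff_psi S.ω S.smooth S.invertible a b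
  have hsw : ContDiff ℝ (⊤ : ℕ∞) fun y : Pt N => E.s y w :=
    contDiff_pi.mpr fun c => contDiff_slice_left (smooth_Sf E c) w
  have hAsl : ∀ r a : Fin N, ContDiff ℝ (⊤ : ℕ∞) fun y => AA E r a (y, w) :=
    fun r a => contDiff_slice_left (smooth_AA E r a) w
  have hψs : ∀ r t : Fin N, ContDiff ℝ (⊤ : ℕ∞) fun y => Psi S.ω (E.s y w) r t :=
    fun r t => (hψsm r t).comp hsw
  -- the matrix-valued function M
  set M : Pt N → Fin N → Fin N → ℝ := fun y r t =>
    (∑ a, ∑ b, AA E r a (y, w) * Psi S.ω w a b * AA E t b (y, w))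
      - Psi S.ω (E.s y w) r t with hMdef
  have hM : ∀ r t, ContDiff ℝ (⊤ : ℕ∞) fun y => M y r t := by
    intro r t
    refine ContDiff.sub ?_ (hψs r t)
    exact ContDiff.sum fun a _ => ContDiff.sum fun b _ =>
      (((hAsl r a).mul contDiff_const).mul (hAsl t b))
  set Bc : Pt N → Fin N → Fin N → Fin N → ℝ :=
    fun y j r k => BB E j r k (y, E.s y w) with hBcdef
  have hBc : ∀ j r k, Continuous fun y => Bc y j r k := by
    intro j r k
    exact ((smooth_BB E j r k).continuous).comp
      (continuous_id.prodMk (continuous_pi fun c =>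
        ((smooth_Sf E c).continuous).comp (continuous_id.prodMk continuous_const)))
  -- the ODE system
  have hode : ∀ y j i_ l_, pd j (fun y' => M y' i_ l_) y
      = (∑ k, Bc y j i_ k * M y k l_) + ∑ k, M y i_ k * Bc y j l_ k := by
    intro y j i_ l_
    have dA : ∀ r a : Fin N, DifferentiableAt ℝ (fun y' => AA E r a (y', w)) y :=
      fun r a => ((hAsl r a).differentiable (by simp)) y
    have dterm : ∀ a b : Fin N, DifferentiableAt ℝ
        (fun y' => AA E i_ a (y', w) * Psi S.ω w a b * AA E l_ b (y', w)) y :=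
      fun a b => (((dA i_ a).mul_const _).mul (dA l_ b))
    have dbig : DifferentiableAt ℝ
        (fun y' => ∑ a, ∑ b, AA E i_ a (y', w) * Psi S.ω w a b * AA E l_ b (y', w)) y := by
      apply DifferentiableAt.fun_sum
      intro a _
      exact DifferentiableAt.fun_sum fun b _ => dterm a b
    have dψ : DifferentiableAt ℝ (fun y' => Psi S.ω (E.s y' w) i_ l_) y :=
      ((hψs i_ l_).differentiable (by simp)) y
    -- expand the derivative of the difference
    have e0 : pd j (fun y' => M y' i_ l_) y
        = pd j (fun y' => ∑ a, ∑ b,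
            AA E i_ a (y', w) * Psi S.ω w a b * AA E l_ b (y', w)) y
          - pd j (fun y' => Psi S.ω (E.s y' w) i_ l_) y :=
      pd_sub _ _ y j dbig dψ
    -- derivative of each product term
    have hterm : ∀ a b : Fin N,
        pd j (fun y' => AA E i_ a (y', w) * Psi S.ω w a b * AA E l_ b (y', w)) y
          = pd j (fun y' => AA E i_ a (y', w)) y * Psi S.ω w a b * AA E l_ b (y, w)
            + AA E i_ a (y, w) * Psi S.ω w a b * pd j (fun y' => AA E l_ b (y', w)) y := by
      intro a b
      have h1 := pd_mul (fun y' => AA E i_ a (y', w) * Psi S.ω w a b)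
        (fun y' => AA E l_ b (y', w)) y j ((dA i_ a).mul_const _) (dA l_ b)
      rw [h1, pd_mul_const _ _ _ _ (dA i_ a)]
    have ebig : pd j (fun y' => ∑ a, ∑ b,
          AA E i_ a (y', w) * Psi S.ω w a b * AA E l_ b (y', w)) y
        = (∑ k, BB E j i_ k (y, E.s y w) * (∑ a, ∑ b,
              AA E k a (y, w) * Psi S.ω w a b * AA E l_ b (y, w)))
          + ∑ k, BB E j l_ k (y, E.s y w) * (∑ a, ∑ b,
              AA E i_ a (y, w) * Psi S.ω w a b * AA E k b (y, w)) := by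
      rw [pd_sum Finset.univ _ y j (fun a _ => DifferentiableAt.fun_sum fun b _ => dterm a b)]
      rw [Finset.sum_congr rfl (fun a _ =>
        pd_sum Finset.univ _ y j (fun b _ => dterm a b))]
      rw [Finset.sum_congr rfl (fun a _ => Finset.sum_congr rfl (fun b _ => hterm a b))]
      rw [Finset.sum_congr rfl (fun a _ => Finset.sum_add_distrib), Finset.sum_add_distrib]
      congr 1
      · -- first piece
        rw [Finset.sum_congr rfl (fun a _ => Finset.sum_congr rfl (fun b _ => by
          rw [mixedAA E y w j i_ a]))]
        -- now: ∑ a, ∑ b, (∑ k, BB ... * AA k a) * Psi * AA l_ b = ∑ k, Bc * (∑ a ∑ b ...)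
        have expand : ∀ a b : Fin N,
            (∑ k, BB E j i_ k (y, E.s y w) * AA E k a (y, w)) * Psi S.ω w a b
                * AA E l_ b (y, w)
              = ∑ k, BB E j i_ k (y, E.s y w)
                  * (AA E k a (y, w) * Psi S.ω w a b * AA E l_ b (y, w)) := by
          intro a b
          rw [Finset.sum_mul, Finset.sum_mul]
          exact Finset.sum_congr rfl fun k _ => by ring
        rw [Finset.sum_congr rfl (fun a _ => Finset.sum_congr rfl (fun b _ => expand a b))]
        rw [sum3_rot' (fun a b k => BB E j i_ k (y, E.s y w)
          * (AA E k a (y, w) * Psi S.ω w a b * AA E l_ b (y, w)))]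
        refine Finset.sum_congr rfl fun k _ => ?_
        rw [Finset.mul_sum]
        refine Finset.sum_congr rfl fun a _ => ?_
        rw [Finset.mul_sum]
      · -- second piece
        rw [Finset.sum_congr rfl (fun a _ => Finset.sum_congr rfl (fun b _ => by
          rw [mixedAA E y w j l_ b]))]
        have expand : ∀ a b : Fin N,
            AA E i_ a (y, w) * Psi S.ω w a b
                * (∑ k, BB E j l_ k (y, E.s y w) * AA E k b (y, w))
              = ∑ k, BB E j l_ k (y, E.s y w)
                  * (AA E i_ a (y, w) * Psi S.ω w a b * AA E k b (y, w)) := by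
          intro a b
          rw [Finset.mul_sum]
          exact Finset.sum_congr rfl fun k _ => by ring
        rw [Finset.sum_congr rfl (fun a _ => Finset.sum_congr rfl (fun b _ => expand a b))]
        rw [sum3_rot' (fun a b k => BB E j l_ k (y, E.s y w)
          * (AA E i_ a (y, w) * Psi S.ω w a b * AA E k b (y, w)))]
        refine Finset.sum_congr rfl fun k _ => ?_
        rw [Finset.mul_sum]
        refine Finset.sum_congr rfl fun a _ => ?_
        rw [Finset.mul_sum]
    -- derivative of the Psi term, via the chain rule and `lieDeriv`
    have eψ : pd j (fun y' => Psi S.ω (E.s y' w) i_ l_) y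
        = (∑ k, BB E j i_ k (y, E.s y w) * Psi S.ω (E.s y w) k l_)
          + ∑ k, Psi S.ω (E.s y w) i_ k * BB E j l_ k (y, E.s y w) := by
      have hch := pd_comp_dir (fun v => Psi S.ω v i_ l_) (fun y' => E.s y' w) y
        (Pi.single j 1)
        (((hψsm i_ l_).differentiable (by simp)) _)
        (fun c => ((contDiff_slice_left (smooth_Sf E c) w).differentiable (by simp)) y)
      have hch' : pd j (fun y' => Psi S.ω (E.s y' w) i_ l_) y
          = ∑ k, GG E j k (y, E.s y w)
              * pd k (fun v => Psi S.ω v i_ l_) (E.s y w) := by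
        rw [pd]
        rw [hch]
        refine Finset.sum_congr rfl fun k _ => ?_
        rw [mul_comm]
        congr 1
        exact reflE' E y w j k
      rw [hch']
      exact (lieDeriv E y (E.s y w) j i_ l_).symm
    rw [e0, ebig, eψ]
    simp only [hBcdef, hMdef]
    have m1 : ∀ k : Fin N, BB E j i_ k (y, E.s y w)
          * ((∑ a, ∑ b, AA E k a (y, w) * Psi S.ω w a b * AA E l_ b (y, w))
            - Psi S.ω (E.s y w) k l_)
        = BB E j i_ k (y, E.s y w)
            * (∑ a, ∑ b, AA E k a (y, w) * Psi S.ω w a b * AA E l_ b (y, w))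
          - BB E j i_ k (y, E.s y w) * Psi S.ω (E.s y w) k l_ := fun k => by ring
    have m2 : ∀ k : Fin N, ((∑ a, ∑ b, AA E i_ a (y, w) * Psi S.ω w a b * AA E k b (y, w))
            - Psi S.ω (E.s y w) i_ k) * BB E j l_ k (y, E.s y w)
        = BB E j l_ k (y, E.s y w)
            * (∑ a, ∑ b, AA E i_ a (y, w) * Psi S.ω w a b * AA E k b (y, w))
          - Psi S.ω (E.s y w) i_ k * BB E j l_ k (y, E.s y w) := fun k => by ring
    rw [Finset.sum_congr rfl (fun k _ => m1 k), Finset.sum_congr rfl (fun k _ => m2 k),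
      Finset.sum_sub_distrib, Finset.sum_sub_distrib]
    ring
  -- initial condition at the diagonal
  have h0 : ∀ r t, M w r t = 0 := by
    intro r t
    rw [hMdef]
    simp only [E.reflInit w]
    have : ∀ a b : Fin N, AA E r a (w, w) * Psi S.ω w a b * AA E t b (w, w)
        = (if r = a then (1:ℝ) else 0) * Psi S.ω w a b * (if t = b then (1:ℝ) else 0) := by
      intro a b
      rw [diagAA E w r a, diagAA E w t b]
      ring
    rw [Finset.sum_congr rfl (fun a _ => Finset.sum_congr rfl (fun b _ => this a b))]
    simp
  have := linear_ode_zero M Bc hM hBc hode w h0 x i l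
  rw [hMdef] at this
  simp only [] at this
  linarith [this]

lemma sum3_swap13 {N : ℕ} (F : Fin N → Fin N → Fin N → ℝ) :
    (∑ l, ∑ m, ∑ p, F l m p) = ∑ p, ∑ m, ∑ l, F l m p :=
  calc (∑ l, ∑ m, ∑ p, F l m p) = ∑ m, ∑ l, ∑ p, F l m p := Finset.sum_comm
    _ = ∑ m, ∑ p, ∑ l, F l m p := Finset.sum_congr rfl fun m _ => Finset.sum_comm
    _ = ∑ p, ∑ m, ∑ l, F l m p := Finset.sum_comm

/-- the key vanishing-derivative computation -/
lemma key_vanish (z₀ : Pt N) (y : Pt N) (j i : Fin N) :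
    pd j (fun y' => E.s y' (E.s y' z₀) i) y = 0 := by
  have hui : ∀ k, ContDiff ℝ (⊤ : ℕ∞) (fun y' => E.s y' z₀ k) :=
    fun k => contDiff_slice_left (smooth_Sf E k) z₀
  set u : Pt N := E.s y z₀ with hu
  set U : Pt N →L[ℝ] Pt N :=
    ContinuousLinearMap.pi (fun k => fderiv ℝ (fun y' => E.s y' z₀ k) y) with hUdef
  have hUd : HasFDerivAt (fun y' => E.s y' z₀) U y :=
    hasFDerivAt_pi.2 (fun k => (((hui k).differentiable (by simp)) y).hasFDerivAt)
  have hcd : HasFDerivAt (fun y' : Pt N => (y', E.s y' z₀))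
      ((ContinuousLinearMap.id ℝ (Pt N)).prod U) y := (hasFDerivAt_id y).prodMk hUd
  have hSd : HasFDerivAt (Sf E i) (fderiv ℝ (Sf E i) (y, u)) (y, u) :=
    (((smooth_Sf E i).differentiable (by simp)) (y, u)).hasFDerivAt
  have hcomp := (hSd.comp y hcd).fderiv
  have hfun : (fun y' => E.s y' (E.s y' z₀) i)
      = (Sf E i) ∘ (fun y' : Pt N => (y', E.s y' z₀)) := rfl
  have e1 : pd j (fun y' => E.s y' (E.s y' z₀) i) y
      = fderiv ℝ (Sf E i) (y, u) (Pi.single j 1, U (Pi.single j 1)) := by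
    rw [pd, hfun, hcomp]
    rfl
  have e2 : ∀ k, U (Pi.single j 1) k = GG E j k (y, u) := by
    intro k
    rw [hUdef]
    rw [ContinuousLinearMap.pi_apply]
    exact reflE' E y z₀ j k
  rw [e1, fderiv_prod_dir, sderiv1 E y u j i]
  have e5 : fderiv ℝ (Sf E i) (y, u) (0, U (Pi.single j 1))
      = ∑ l, GG E j l (y, u) * AA E i l (y, u) := by
    rw [clm_apply_sum_right]
    exact Finset.sum_congr rfl fun l _ => by rw [e2 l]; rfl
  rw [e5]
  -- the skew-symmetry relation transports the H-derivative across the reflection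
  have skw : ∀ m : Fin N, fderiv ℝ (Hf E j) (y, u) (0, Pi.single m 1)
      = -∑ p, fderiv ℝ (Hf E j) (y, E.s y u) (0, Pi.single p 1) * AA E p m (y, u) := by
    intro m
    have h := skewD E y u j m
    linarith [h]
  have heart : ∑ l, GG E j l (y, u) * AA E i l (y, u) = - GG E j i (y, E.s y u) := by
    calc ∑ l, GG E j l (y, u) * AA E i l (y, u)
        = ∑ l, ∑ m, ∑ p, -(fderiv ℝ (Hf E j) (y, E.s y u) (0, Pi.single p 1)
            * (AA E p m (y, u) * Psi S.ω u m l * AA E i l (y, u))) := by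
          refine Finset.sum_congr rfl fun l _ => ?_
          rw [show GG E j l (y, u)
              = ∑ m, fderiv ℝ (Hf E j) (y, u) (0, Pi.single m 1) * Psi S.ω u m l from rfl]
          rw [Finset.sum_mul]
          refine Finset.sum_congr rfl fun m _ => ?_
          rw [skw m, neg_mul, neg_mul, Finset.sum_mul, Finset.sum_mul,
            ← Finset.sum_neg_distrib]
          refine Finset.sum_congr rfl fun p _ => by ring
      _ = ∑ p, ∑ m, ∑ l, -(fderiv ℝ (Hf E j) (y, E.s y u) (0, Pi.single p 1)
            * (AA E p m (y, u) * Psi S.ω u m l * AA E i l (y, u))) :=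
          sum3_swap13 _
      _ = -∑ p, fderiv ℝ (Hf E j) (y, E.s y u) (0, Pi.single p 1)
            * (∑ m, ∑ l, AA E p m (y, u) * Psi S.ω u m l * AA E i l (y, u)) := by
          rw [← Finset.sum_neg_distrib]
          refine Finset.sum_congr rfl fun p _ => ?_
          rw [Finset.mul_sum, ← Finset.sum_neg_distrib]
          refine Finset.sum_congr rfl fun m _ => ?_
          rw [Finset.mul_sum, ← Finset.sum_neg_distrib]
      _ = -∑ p, fderiv ℝ (Hf E j) (y, E.s y u) (0, Pi.single p 1)
            * Psi S.ω (E.s y u) p i := by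
          rw [neg_inj]
          refine Finset.sum_congr rfl fun p _ => ?_
          rw [poisson E y u p i]
      _ = - GG E j i (y, E.s y u) := by
          rw [neg_inj]
          rfl
  rw [heart]
  ring

/-- Theorem 2.1(ii), general form. -/
lemma invol (x z₀ : Pt N) : E.s x (E.s x z₀) = z₀ := by
  have hFi : ∀ i, ContDiff ℝ (⊤ : ℕ∞) (fun y => E.s y (E.s y z₀) i) := by
    intro i
    have hf : (fun y => E.s y (E.s y z₀) i)
        = (Sf E i) ∘ (fun y : Pt N => (y, E.s y z₀)) := rfl
    rw [hf]
    exact (smooth_Sf E i).comp (contDiff_id.prodMk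
      (contDiff_pi.mpr fun k => contDiff_slice_left (smooth_Sf E k) z₀))
  funext i
  have hconst : E.s x (E.s x z₀) i = E.s z₀ (E.s z₀ z₀) i := by
    refine is_const_of_fderiv_eq_zero (𝕜 := ℝ) ((hFi i).differentiable (by simp)) ?_ x z₀
    intro y
    refine ContinuousLinearMap.ext fun v => ?_
    rw [ContinuousLinearMap.zero_apply, clm_apply_sum]
    refine Finset.sum_eq_zero fun k _ => ?_
    have := key_vanish E z₀ y k i
    rw [pd] at this
    rw [this, mul_zero]
  rw [hconst, E.reflInit z₀, E.reflInit z₀]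

end Ether2

end EtherProof

/-- Theorem 2.1(ii): the reflections of an Ether structure are involutions,
`s_x(s_x(z)) = z`. -/
theorem reflections_are_involutions (n : ℕ) (S : SymplForm (2*n))
    (C : SymplConn (2*n) S) (E : EtherStructure (2*n) S C) :
    ∀ x z : Pt (2*n), E.s x (E.s x z) = z :=
  fun x z => EtherProof.invol E x z
end
end

section
/- Each reflection has its base point as an isolated fixed point (Theorem 2.1(ii)): Let (ω,Γ) be a symplectic form with a symplectic connection on ℝ^{2n}, and let (ℋ,s) be an Ether structure for (ω,Γ). Then for every x ∈ ℝ^{2n}: s_x(x) = x, and the Jacobian of s_x at its base point is minus the identity, ∂s_x(z)^i/∂z^k|_{z=x} = −δ^i_k; in particular x is an isolated fixed point of s_x. -/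
open scoped BigOperators
noncomputable section

section Aux

open ContinuousLinearMap in
/-- Chain rule for partial derivatives in coordinates. -/
lemma pd_comp {N : ℕ} (f : Pt N → ℝ) (g : Pt N → Pt N) (x : Pt N) (k : Fin N)
    (hf : DifferentiableAt ℝ f (g x)) (hg : ∀ i, DifferentiableAt ℝ (fun z => g z i) x) :
    pd k (fun z => f (g z)) x = ∑ m, pd m f (g x) * pd k (fun z => g z m) x := by
  have hg' : DifferentiableAt ℝ g x := by
    have : g = fun z i => g z i := rfl
    rw [this]; exact differentiableAt_pi.2 hg
  have hcomp : (fun z => f (g z)) = f ∘ g := rfl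
  rw [pd, hcomp, fderiv_comp x hf hg', ContinuousLinearMap.comp_apply]
  set v : Pt N := fderiv ℝ g x (Pi.single k 1) with hvdef
  have hv : ∀ m, v m = pd k (fun z => g z m) x := by
    intro m
    have : fderiv ℝ g x = ContinuousLinearMap.pi (fun i => fderiv ℝ (fun z => g z i) x) := by
      exact fderiv_pi hg
    rw [hvdef, this]; rfl
  have hsum : v = ∑ m, v m • (Pi.single m 1 : Pt N) := by
    funext j
    rw [Finset.sum_apply]
    simp [Pi.single_apply, eq_comm]
  calc fderiv ℝ f (g x) v = fderiv ℝ f (g x) (∑ m, v m • (Pi.single m 1 : Pt N)) := by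
        rw [← hsum]
    _ = ∑ m, v m * fderiv ℝ f (g x) (Pi.single m 1) := by
        rw [map_sum]
        exact Finset.sum_congr rfl fun m _ => by
          rw [ContinuousLinearMap.map_smul, smul_eq_mul]
    _ = ∑ m, pd m f (g x) * pd k (fun z => g z m) x := by
        exact Finset.sum_congr rfl fun m _ => by rw [pd, hv m, mul_comm]

/-- Scaling by `-2` as a continuous linear equivalence. -/
noncomputable def negTwoEquiv (N : ℕ) : Pt N ≃L[ℝ] Pt N :=
  { toFun := fun v => (-2 : ℝ) • v
    invFun := fun v => (-2⁻¹ : ℝ) • v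
    map_add' := fun a b => smul_add _ a b
    map_smul' := fun c a => smul_comm _ c a
    left_inv := fun v => by show (-2⁻¹:ℝ) • (-2:ℝ) • v = v; rw [smul_smul]; norm_num
    right_inv := fun v => by show (-2:ℝ) • (-2⁻¹:ℝ) • v = v; rw [smul_smul]; norm_num
    continuous_toFun := continuous_const_smul _
    continuous_invFun := continuous_const_smul _ }

lemma negTwoEquiv_apply {N : ℕ} (v : Pt N) : negTwoEquiv N v = (-2 : ℝ) • v := rfl

end Aux

/-- Theorem 2.1(ii): each reflection `s_x` has `x` as a fixed point, its Jacobian at `x`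
is minus the identity, and `x` is an isolated fixed point of `s_x`. -/
theorem reflection_isolated_fixed_point (n : ℕ) (S : SymplForm (2*n))
    (C : SymplConn (2*n) S) (E : EtherStructure (2*n) S C) :
    ∀ x : Pt (2*n),
      E.s x x = x ∧
      (∀ i k, pd k (fun w => E.s x w i) x = -(if i = k then (1:ℝ) else 0)) ∧
      (∃ ε > (0:ℝ), ∀ z ∈ Metric.ball x ε, E.s x z = z → z = x) := by
  intro x
  classical
  have hfix : E.s x x = x := E.reflInit x
  have hs_smooth : ∀ i, ContDiff ℝ (⊤ : ℕ∞) fun z => E.s x z i := fun i =>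
    (E.smoothS i).comp (contDiff_const.prodMk contDiff_id)
  have hH_smooth : ∀ k, ContDiff ℝ (⊤ : ℕ∞) fun w => E.H x w k := fun k =>
    (E.smoothH k).comp (contDiff_const.prodMk contDiff_id)
  set J : Matrix (Fin (2*n)) (Fin (2*n)) ℝ := fun i k => pd k (fun w => E.s x w i) x with hJ
  have key : ∀ k' k : Fin (2*n), ∑ m, S.ω x k' m * J m k = - S.ω x k' k := by
    intro k' k
    have hchain := pd_comp (fun w => E.H x w k') (fun z => E.s x z) x k
      ((hH_smooth k').differentiable (by simp) (E.s x x))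
      (fun i => (hs_smooth i).differentiable (by simp) x)
    have hskew : (fun z => E.H x (E.s x z) k') = fun z => - E.H x z k' := by
      funext z; exact E.skew x z k'
    rw [hskew] at hchain
    have hneg : pd k (fun z => - E.H x z k') x = - pd k (fun z => E.H x z k') x := by
      rw [pd, pd, fderiv_fun_neg]; rfl
    rw [hneg, E.bc1 x k' k] at hchain
    simp only [hfix] at hchain
    have hchain' : -(2 * S.ω x k' k) = ∑ m, 2 * S.ω x k' m * J m k := by
      rw [hchain]
      exact Finset.sum_congr rfl fun m _ => by rw [E.bc1 x k' m]
    have h2 : (2:ℝ) * ∑ m, S.ω x k' m * J m k = 2 * (- S.ω x k' k) := by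
      rw [Finset.mul_sum,
        show ∑ m, 2 * (S.ω x k' m * J m k) = ∑ m, 2 * S.ω x k' m * J m k from
          Finset.sum_congr rfl fun m _ => by ring, ← hchain']
      ring
    exact mul_left_cancel₀ two_ne_zero h2
  have hMat : S.ω x * J = -(S.ω x) := by
    ext k' k
    rw [Matrix.mul_apply, Matrix.neg_apply]
    exact key k' k
  have hJeq : J = -1 := by
    haveI := (S.ω x).invertibleOfIsUnitDet (S.invertible x)
    calc J = ⅟(S.ω x) * (S.ω x * J) := by
            rw [← Matrix.mul_assoc, invOf_mul_self, Matrix.one_mul]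
      _ = ⅟(S.ω x) * (-(S.ω x)) := by rw [hMat]
      _ = -(⅟(S.ω x) * S.ω x) := by rw [Matrix.mul_neg]
      _ = -1 := by rw [invOf_mul_self]
  have hJac : ∀ i k, pd k (fun w => E.s x w i) x = -(if i = k then (1:ℝ) else 0) := by
    intro i k
    have h : J i k = (-1 : Matrix (Fin (2*n)) (Fin (2*n)) ℝ) i k := by rw [hJeq]
    rw [hJ] at h
    simpa [Matrix.one_apply] using h
  refine ⟨hfix, hJac, ?_⟩
  -- isolated fixed point
  have hsdiff : HasStrictFDerivAt (fun z => E.s x z)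
      (fderiv ℝ (fun z => E.s x z) x) x := by
    have hcd : ContDiff ℝ (⊤ : ℕ∞) (fun z => E.s x z) := by
      rw [show (fun z => E.s x z) = fun z i => E.s x z i from rfl]
      exact contDiff_pi.2 hs_smooth
    exact (hcd.contDiffAt).hasStrictFDerivAt (by simp)
  have hfd : fderiv ℝ (fun z => E.s x z) x = -(ContinuousLinearMap.id ℝ (Pt (2*n))) := by
    apply ContinuousLinearMap.coe_injective
    apply (Pi.basisFun ℝ (Fin (2*n))).ext
    intro k
    simp only [Pi.basisFun_apply]
    funext i
    have hpi : fderiv ℝ (fun z => E.s x z) x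
        = ContinuousLinearMap.pi (fun i => fderiv ℝ (fun z => E.s x z i) x) :=
      fderiv_pi (fun i => (hs_smooth i).differentiable (by simp) x)
    have hL : (fderiv ℝ (fun z => E.s x z) x) (Pi.single k 1) i
        = pd k (fun z => E.s x z i) x := by rw [hpi]; rfl
    rw [ContinuousLinearMap.coe_coe, ContinuousLinearMap.coe_coe, hL, hJac i k]
    simp [Pi.single_apply]
  rw [hfd] at hsdiff
  have hgdiff : HasStrictFDerivAt (fun z => E.s x z - z)
      ((negTwoEquiv (2*n) : Pt (2*n) ≃L[ℝ] Pt (2*n)) : Pt (2*n) →L[ℝ] Pt (2*n)) x := by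
    have h := hsdiff.sub (hasStrictFDerivAt_id x)
    have heq : (-(ContinuousLinearMap.id ℝ (Pt (2*n))) - ContinuousLinearMap.id ℝ (Pt (2*n)))
        = ((negTwoEquiv (2*n) : Pt (2*n) ≃L[ℝ] Pt (2*n)) : Pt (2*n) →L[ℝ] Pt (2*n)) := by
      apply ContinuousLinearMap.ext
      intro v
      show -v - v = (-2 : ℝ) • v
      funext i
      simp
      ring
    rw [heq] at h
    exact h
  have hev := hgdiff.eventually_left_inverse
  rw [Metric.eventually_nhds_iff_ball] at hev
  obtain ⟨ε, hε, hball⟩ := hev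
  refine ⟨ε, hε, fun z hz hsz => ?_⟩
  have hzx : E.s x z - z = E.s x x - x := by rw [hsz, hfix]; simp
  have h1 := hball z hz
  have h2 := hball x (Metric.mem_ball_self hε)
  rw [hzx, h2] at h1
  exact h1.symm
end
end
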